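/- Let (v, 0, s) ∈ 𝔳 × 𝔷 × ℝ be a unit vector whose 𝔷-component is 0, with s ≠ 0, let p = (V̄, Z̄, t̄) ∈ 𝔳 × 𝔷 × (0,∞), and let η(θ) = L_p(γ(θ)), where γ is the prolonged geodesic with data (v, 0, s). Then for every fixed point (V, Z, t) ∈ 𝔳 × 𝔷 × (0,∞), the function θ ↦ (1/θ − s)² · D_{η(θ)}(V, Z, t) converges, as θ → 1/s with θ ≠ 1/s (punctured neighborhood filter), to (t̄/t)·((2s√t̄ − ⟨V − V̄, v⟩)² + ‖[V − V̄, v]‖²), which equals t̄ times the limiting isoparametric function D_⊛^η(V, Z, t) = (1/t)·((2s√t̄ − ⟨V−V̄, v⟩)² + ‖[V−V̄, v]‖²). -/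

import Mathlib

/-!
With `z = 0` the geodesic is horizontal, `γ(θ) = (a • v, 0, τ)` with `a = 2θ / (1 - sθ)`, so the
left translate `η(θ)` has centre component `Z̄ + (√t̄ a / 2) • [V̄, v]`. The factor
`(1/θ - s)² = (2/a)²` cancels the pole of `D_{η(θ)}`: using `‖v‖² = 1 - s²`, the two rescaled
squared terms become `(1/θ - s)(t + ‖V - V̄‖²/4) + t̄ (1/θ + s) - √t̄ ⟪V - V̄, v⟫` and
`(1/θ - s) • (Z - Z̄ + ½ [V, V̄]) + √t̄ • [V - V̄, v]`, which are continuous at `θ = 1/s`,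
where `1/θ - s` vanishes.
-/

open RealInnerProductSpace Filter Topology

section

variable {𝕍 𝕫 : Type*} [NormedAddCommGroup 𝕍] [InnerProductSpace ℝ 𝕍] [FiniteDimensional ℝ 𝕍]
  [NormedAddCommGroup 𝕫] [InnerProductSpace ℝ 𝕫] [FiniteDimensional ℝ 𝕫]

/-- The distorted distance function `D_{x₀}`. -/
noncomputable def distD (br : 𝕍 →ₗ[ℝ] 𝕍 →ₗ[ℝ] 𝕫) (x₀ x : 𝕍 × 𝕫 × ℝ) : ℝ :=
  (1 / x.2.2) *
    ((x.2.2 + x₀.2.2 + ‖(1 / 2 : ℝ) • (x.1 - x₀.1)‖ ^ 2) ^ 2 +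
      ‖x.2.1 - x₀.2.1 + (1 / 2 : ℝ) • br x.1 x₀.1‖ ^ 2)

/-- The left translation by `p = (V̄, Z̄, t̄)`. -/
noncomputable def leftT (br : 𝕍 →ₗ[ℝ] 𝕍 →ₗ[ℝ] 𝕫) (p x : 𝕍 × 𝕫 × ℝ) : 𝕍 × 𝕫 × ℝ :=
  (p.1 + Real.sqrt p.2.2 • x.1,
   p.2.1 + p.2.2 • x.2.1 + ((1 / 2 : ℝ) * Real.sqrt p.2.2) • br p.1 x.1,
   p.2.2 * x.2.2)

end

lemma geodesic_eq_of_center_eq_zero {E F : Type*} [AddCommGroup E] [Module ℝ E]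
    [AddCommGroup F] [Module ℝ F] (J : F →ₗ[ℝ] E →ₗ[ℝ] E) (v : E) (s θ : ℝ) :
    ((2 * θ * (1 - s * θ) / (1 - s * θ) ^ 2) • v + (2 * θ ^ 2 / (1 - s * θ) ^ 2) • J 0 v,
      (2 * θ / (1 - s * θ) ^ 2) • (0 : F), (1 - θ ^ 2) / (1 - s * θ) ^ 2) =
    ((2 * θ / (1 - s * θ)) • v, 0, (1 - θ ^ 2) / (1 - s * θ) ^ 2) := by
  have hcoef : 2 * θ * (1 - s * θ) / (1 - s * θ) ^ 2 = 2 * θ / (1 - s * θ) := by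
    field_simp
  simp only [hcoef, map_zero, LinearMap.zero_apply, smul_zero, add_zero]

lemma sq_mul_mul_sq_add_norm_sq {E : Type*} [SeminormedAddCommGroup E] [NormedSpace ℝ E]
    (l c a : ℝ) (B : E) :
    l ^ 2 * (c * (a ^ 2 + ‖B‖ ^ 2)) = c * ((l * a) ^ 2 + ‖l • B‖ ^ 2) := by
  rw [norm_smul, Real.norm_eq_abs, mul_pow, mul_pow, sq_abs]
  ring

section

variable {𝕍 𝕫 : Type*} [NormedAddCommGroup 𝕍] [InnerProductSpace ℝ 𝕍]
  [NormedAddCommGroup 𝕫] [InnerProductSpace ℝ 𝕫]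

lemma distD_leftT_horizontal [FiniteDimensional ℝ 𝕍] [FiniteDimensional ℝ 𝕫]
    (br : 𝕍 →ₗ[ℝ] 𝕍 →ₗ[ℝ] 𝕫) (Vb : 𝕍) (Zb : 𝕫) (tb : ℝ) (w : 𝕍) (τ : ℝ)
    (V : 𝕍) (Z : 𝕫) (t : ℝ) :
    distD br (leftT br (Vb, Zb, tb) (w, 0, τ)) (V, Z, t) =
      1 / t * ((t + tb * τ + ‖(1 / 2 : ℝ) • (V - Vb - √tb • w)‖ ^ 2) ^ 2 +
        ‖Z - Zb + (1 / 2 : ℝ) • br V Vb + ((1 / 2 : ℝ) * √tb) • br (V - Vb) w‖ ^ 2) := by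
  simp only [distD, leftT, smul_zero, add_zero, map_add, map_smul, map_sub,
    LinearMap.sub_apply, sub_add_eq_sub_sub, smul_sub, smul_add, smul_smul]
  congr 4
  module

variable (br : 𝕍 →ₗ[ℝ] 𝕍 →ₗ[ℝ] 𝕫) {v : 𝕍} {s tb θ : ℝ} (Vb V : 𝕍) (Zb Z : 𝕫) (t : ℝ)

lemma geodesic_time_term (hv : ‖v‖ ^ 2 = 1 - s ^ 2) (htb : 0 ≤ tb) (hθ : θ ≠ 0)
    (hsθ : 1 - s * θ ≠ 0) :
    (1 / θ - s) * (t + tb * ((1 - θ ^ 2) / (1 - s * θ) ^ 2) +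
        ‖(1 / 2 : ℝ) • (V - Vb - √tb • (2 * θ / (1 - s * θ)) • v)‖ ^ 2) =
      (1 / θ - s) * (t + ‖V - Vb‖ ^ 2 / 4) + tb * (1 / θ + s) - √tb * ⟪V - Vb, v⟫ := by
  rw [smul_smul, norm_smul, mul_pow, norm_sub_sq_real, inner_smul_right, norm_smul, mul_pow,
    Real.norm_eq_abs, Real.norm_eq_abs, sq_abs, sq_abs, mul_pow, Real.sq_sqrt htb, hv]
  have hsθ' : 1 - θ * s ≠ 0 := by rwa [mul_comm]
  field_simp
  ring

lemma geodesic_center_term (hθ : θ ≠ 0) (hsθ : 1 - s * θ ≠ 0) :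
    (1 / θ - s) • (Z - Zb + (1 / 2 : ℝ) • br V Vb +
        ((1 / 2 : ℝ) * √tb) • br (V - Vb) ((2 * θ / (1 - s * θ)) • v)) =
      (1 / θ - s) • (Z - Zb + (1 / 2 : ℝ) • br V Vb) + √tb • br (V - Vb) v := by
  have hscale : (1 / θ - s) * ((1 / 2 : ℝ) * √tb * (2 * θ / (1 - s * θ))) = √tb := by
    have hsθ' : 1 - θ * s ≠ 0 := by rwa [mul_comm]
    field_simp
  rw [map_smul, smul_smul, smul_add, smul_smul, hscale]

lemma sq_mul_distD_leftT_geodesic [FiniteDimensional ℝ 𝕍] [FiniteDimensional ℝ 𝕫]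
    (hv : ‖v‖ ^ 2 = 1 - s ^ 2) (htb : 0 ≤ tb) (hθ : θ ≠ 0) (hsθ : 1 - s * θ ≠ 0) :
    (1 / θ - s) ^ 2 * distD br (leftT br (Vb, Zb, tb)
        ((2 * θ / (1 - s * θ)) • v, 0, (1 - θ ^ 2) / (1 - s * θ) ^ 2)) (V, Z, t) =
      1 / t * (((1 / θ - s) * (t + ‖V - Vb‖ ^ 2 / 4) + tb * (1 / θ + s) - √tb * ⟪V - Vb, v⟫) ^ 2 +
        ‖(1 / θ - s) • (Z - Zb + (1 / 2 : ℝ) • br V Vb) + √tb • br (V - Vb) v‖ ^ 2) := by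
  rw [distD_leftT_horizontal, sq_mul_mul_sq_add_norm_sq, geodesic_time_term Vb V t hv htb hθ hsθ,
    geodesic_center_term br Vb V Zb Z hθ hsθ]

lemma tendsto_rescaled_geodesic_distance (hs : s ≠ 0) (htb : 0 ≤ tb) :
    Tendsto (fun θ : ℝ => 1 / t *
        (((1 / θ - s) * (t + ‖V - Vb‖ ^ 2 / 4) + tb * (1 / θ + s) - √tb * ⟪V - Vb, v⟫) ^ 2 +
          ‖(1 / θ - s) • (Z - Zb + (1 / 2 : ℝ) • br V Vb) + √tb • br (V - Vb) v‖ ^ 2))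
      (𝓝 (1 / s)) (𝓝 (tb / t * ((2 * s * √tb - ⟪V - Vb, v⟫) ^ 2 + ‖br (V - Vb) v‖ ^ 2))) := by
  convert ContinuousAt.tendsto ?_ using 2
  · obtain ⟨c, hc, rfl⟩ : ∃ c, 0 ≤ c ∧ tb = c ^ 2 :=
      ⟨√tb, Real.sqrt_nonneg tb, (Real.sq_sqrt htb).symm⟩
    rw [one_div_one_div, sub_self, zero_mul, zero_smul, zero_add, zero_add, norm_smul,
      Real.norm_eq_abs, Real.sqrt_sq hc, abs_of_nonneg hc]
    ring
  · fun_prop (disch := exact one_div_ne_zero hs)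

end

section

variable {𝕍 𝕫 : Type*} [NormedAddCommGroup 𝕍] [InnerProductSpace ℝ 𝕍] [FiniteDimensional ℝ 𝕍]
  [NormedAddCommGroup 𝕫] [InnerProductSpace ℝ 𝕫] [FiniteDimensional ℝ 𝕫]

theorem stmt_12_general
    (J : 𝕫 →ₗ[ℝ] 𝕍 →ₗ[ℝ] 𝕍)
    (br : 𝕍 →ₗ[ℝ] 𝕍 →ₗ[ℝ] 𝕫)
    (v : 𝕍) (s : ℝ) (hunit : ‖v‖ ^ 2 + ‖(0 : 𝕫)‖ ^ 2 + s ^ 2 = 1) (hs : s ≠ 0)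
    (Vb : 𝕍) (Zb : 𝕫) (tb : ℝ) (htb : 0 < tb)
    (V : 𝕍) (Z : 𝕫) (t : ℝ) :
    Tendsto
      (fun θ : ℝ =>
        (1 / θ - s) ^ 2 *
          distD br
            (leftT br (Vb, Zb, tb)
              ((2 * θ * (1 - s * θ) / (1 - s * θ) ^ 2) • v +
                  (2 * θ ^ 2 / (1 - s * θ) ^ 2) • J 0 v,
                (2 * θ / (1 - s * θ) ^ 2) • (0 : 𝕫),
                (1 - θ ^ 2) / (1 - s * θ) ^ 2))
            (V, Z, t))
      (𝓝[≠] (1 / s))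
      (𝓝 ((tb / t) *
        ((2 * s * Real.sqrt tb - ⟪V - Vb, v⟫) ^ 2 + ‖br (V - Vb) v‖ ^ 2))) ∧
    (tb / t) * ((2 * s * Real.sqrt tb - ⟪V - Vb, v⟫) ^ 2 + ‖br (V - Vb) v‖ ^ 2) =
      tb * ((1 / t) *
        ((2 * s * Real.sqrt tb - ⟪V - Vb, v⟫) ^ 2 + ‖br (V - Vb) v‖ ^ 2)) := by
  refine ⟨?_, by ring⟩
  have hv : ‖v‖ ^ 2 = 1 - s ^ 2 := by rw [norm_zero] at hunit; linarith
  have hθ : ∀ᶠ θ in 𝓝[≠] (1 / s), θ ≠ 0 ∧ 1 - s * θ ≠ 0 := by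
    filter_upwards [nhdsWithin_le_nhds (eventually_ne_nhds (one_div_ne_zero hs)),
      self_mem_nhdsWithin] with θ hθ hθs
    exact ⟨hθ, fun hsθ => hθs (eq_one_div_of_mul_eq_one_right (by linear_combination -hsθ))⟩
  refine ((tendsto_rescaled_geodesic_distance br Vb V Zb Z t hs htb.le).mono_left
    nhdsWithin_le_nhds).congr' ?_
  filter_upwards [hθ] with θ ⟨hθ0, hsθ⟩
  rw [geodesic_eq_of_center_eq_zero, sq_mul_distD_leftT_geodesic br Vb V Zb Z t hv htb.le hθ0 hsθ]

/-- Let `(v, 0, s)` be a unit vector with `s ≠ 0`, `p = (V̄, Z̄, t̄)` with `t̄ > 0`, and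
`η = L_p ∘ γ` the translated prolonged geodesic (here `χ(θ) = (1-sθ)²` since `z = 0`).
Then for every `(V,Z,t)` with `t > 0`, `(1/θ - s)² D_{η(θ)}(V,Z,t)` converges, as
`θ → 1/s`, `θ ≠ 1/s`, to `(t̄/t)((2s√t̄ - ⟨V-V̄, v⟩)² + ‖[V-V̄, v]‖²)`, which equals
`t̄ · D_⊛^η(V,Z,t)`. -/
theorem stmt_12
    (J : 𝕫 →ₗ[ℝ] 𝕍 →ₗ[ℝ] 𝕍)
    (hJsq : ∀ (z : 𝕫) (v : 𝕍), J z (J z v) = -(‖z‖ ^ 2) • v)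
    (hJnorm : ∀ (z : 𝕫) (v : 𝕍), ‖J z v‖ = ‖z‖ * ‖v‖)
    (br : 𝕍 →ₗ[ℝ] 𝕍 →ₗ[ℝ] 𝕫)
    (hbr : ∀ (U V : 𝕍) (Z : 𝕫), ⟪br U V, Z⟫ = ⟪J Z U, V⟫)
    (v : 𝕍) (s : ℝ) (hunit : ‖v‖ ^ 2 + ‖(0 : 𝕫)‖ ^ 2 + s ^ 2 = 1) (hs : s ≠ 0)
    (Vb : 𝕍) (Zb : 𝕫) (tb : ℝ) (htb : 0 < tb)
    (V : 𝕍) (Z : 𝕫) (t : ℝ) (ht : 0 < t) :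
    Tendsto
      (fun θ : ℝ =>
        (1 / θ - s) ^ 2 *
          distD br
            (leftT br (Vb, Zb, tb)
              ((2 * θ * (1 - s * θ) / (1 - s * θ) ^ 2) • v +
                  (2 * θ ^ 2 / (1 - s * θ) ^ 2) • J 0 v,
                (2 * θ / (1 - s * θ) ^ 2) • (0 : 𝕫),
                (1 - θ ^ 2) / (1 - s * θ) ^ 2))
            (V, Z, t))
      (𝓝[≠] (1 / s))
      (𝓝 ((tb / t) *
        ((2 * s * Real.sqrt tb - ⟪V - Vb, v⟫) ^ 2 + ‖br (V - Vb) v‖ ^ 2))) ∧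
    (tb / t) * ((2 * s * Real.sqrt tb - ⟪V - Vb, v⟫) ^ 2 + ‖br (V - Vb) v‖ ^ 2) =
      tb * ((1 / t) *
        ((2 * s * Real.sqrt tb - ⟪V - Vb, v⟫) ^ 2 + ‖br (V - Vb) v‖ ^ 2)) :=
  stmt_12_general J br v s hunit hs Vb Zb tb htb V Z t

end
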